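/- Let f be the base density as above (with a = 2ln(27/16)) and let (S,B) have density f on [0,1]^2. Then for p ∈ (1/6, 1/2], E[(B−S)·1{S ≤ p ≤ B}] = (2 + 13a)/(6(1+8a)); for p ∈ (1/2, 2/3], E[(B−S)·1{S ≤ p ≤ B}] = (−18a p² + 3a p + 2(1+8a))/(6(1+8a)); and for p ∈ (2/3, 5/6], E[(B−S)·1{S ≤ p ≤ B}] = (−18p² + 15p + 10a)/(6(1+8a)). -/

import Mathlib

open MeasureTheory Set

/-- The normalization constant a = 2·ln(27/16). -/
noncomputable def aNorm : ℝ := 2 * Real.log (27 / 16)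

/-- The base density f of the hard instance construction. -/
noncomputable def baseDensity : ℝ × ℝ → ℝ := fun z =>
  (36 / (1 + 8 * aNorm)) *
    ((Set.Icc (0:ℝ) (1/6) ×ˢ Set.Ico (1/3:ℝ) (1/2)).indicator
        (fun w => (5 - 6 * (w.2 + w.1)) / (6 * (w.2 - w.1))) z
      + aNorm * (Set.Icc (0:ℝ) (1/6) ×ˢ Set.Icc (1/2:ℝ) (2/3)).indicator
          (fun _ => (1:ℝ)) z
      + 2 * aNorm * ((Set.Icc (0:ℝ) (1/6) ×ˢ Set.Icc (5/6:ℝ) 1)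
          ∪ (Set.Icc (5/6:ℝ) 1 ×ˢ Set.Icc (5/6:ℝ) 1)
          ∪ (Set.Icc (5/6:ℝ) 1 ×ˢ Set.Icc (0:ℝ) (1/6))).indicator
          (fun _ => (1:ℝ)) z
      + (Set.Icc (1/3:ℝ) (1/2) ×ˢ Set.Icc (2/3:ℝ) (5/6)).indicator
          (fun _ => (1:ℝ)) z)

/-- Expected gain from trade at price p for valuations with density `baseDensity`. -/
noncomputable def expGFT (p : ℝ) : ℝ :=
  ∫ z : ℝ × ℝ, (z.2 - z.1) *
    ({w : ℝ × ℝ | w.1 ≤ p ∧ p ≤ w.2}.indicator (fun _ => (1:ℝ)) z) * baseDensity z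

/-!
On the trade region `{x ≤ p ≤ y}` the integrand `(y - x) f` is piecewise affine: the density on
`Q1` is designed so that there `(y - x) f` is a multiple of `5/6 - x - y`, and on the other
pieces it is a multiple of `y - x`. A piece `[a, b] × [c, d]` meets the trade region in the
rectangle `[a, min b p] × [max c p, d]`, over which an affine function integrates to the area
times its value at the centre, or to `0` when the rectangle is degenerate. Summing the six pieces
gives a polynomial in `p` on each of the three intervals.
-/

lemma intervalIntegral_const_add_mul (A B c d : ℝ) :
    ∫ t in c..d, (A + B * t) = (d - c) * (A + B * (c + d) / 2) := by
  rw [intervalIntegral.integral_add (g := fun t => B * t) intervalIntegrable_const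
      ((by fun_prop : Continuous fun t : ℝ => B * t).intervalIntegrable _ _),
    intervalIntegral.integral_const, intervalIntegral.integral_const_mul, integral_id,
    smul_eq_mul]
  ring

lemma setIntegral_Icc_prod_Icc_affine {a b c d : ℝ} (hab : a ≤ b) (hcd : c ≤ d) (α β γ : ℝ) :
    ∫ z in Icc a b ×ˢ Icc c d, (α + β * z.1 + γ * z.2)
      = (b - a) * (d - c) * (α + β * (a + b) / 2 + γ * (c + d) / 2) := by
  have hint : IntegrableOn (fun z : ℝ × ℝ => α + β * z.1 + γ * z.2) (Icc a b ×ˢ Icc c d)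
      (volume.prod volume) := by
    rw [← Measure.volume_eq_prod, Icc_prod_Icc]
    exact Continuous.integrableOn_Icc (by fun_prop)
  rw [Measure.volume_eq_prod, setIntegral_prod _ hint]
  simp only [integral_Icc_eq_integral_Ioc, ← intervalIntegral.integral_of_le hab,
    ← intervalIntegral.integral_of_le hcd, intervalIntegral_const_add_mul]
  have hx (x : ℝ) : (d - c) * (α + β * x + γ * (c + d) / 2)
      = (d - c) * (α + γ * (c + d) / 2) + (d - c) * β * x := by ring
  simp only [hx, intervalIntegral_const_add_mul]
  ring

lemma setIntegral_Icc_prod_Icc_sub {a b c d : ℝ} (hab : a ≤ b) (hcd : c ≤ d) :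
    ∫ z in Icc a b ×ˢ Icc c d, (z.2 - z.1) = (b - a) * (d - c) * ((c + d) - (a + b)) / 2 := by
  convert setIntegral_Icc_prod_Icc_affine hab hcd 0 (-1) 1 using 1
  · simp only [zero_add, neg_one_mul, one_mul, neg_add_eq_sub]
  · ring

lemma setIntegral_Icc_prod_Icc_const_sub_sub {a b c d : ℝ} (hab : a ≤ b) (hcd : c ≤ d) (k : ℝ) :
    ∫ z in Icc a b ×ˢ Icc c d, (k - z.1 - z.2)
      = (b - a) * (d - c) * (k - (a + b) / 2 - (c + d) / 2) := by
  convert setIntegral_Icc_prod_Icc_affine hab hcd k (-1) (-1) using 1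
  · simp only [neg_one_mul, ← sub_eq_add_neg]
  · ring

lemma setIntegral_Icc_prod_of_le {a b : ℝ} (hba : b ≤ a) (t : Set ℝ) (g : ℝ × ℝ → ℝ) :
    ∫ z in Icc a b ×ˢ t, g z = 0 := by
  refine setIntegral_measure_zero g ?_
  rw [Measure.volume_eq_prod, Measure.prod_prod, Real.volume_Icc,
    ENNReal.ofReal_eq_zero.2 (sub_nonpos.2 hba), zero_mul]

lemma setIntegral_prod_Icc_of_le {c d : ℝ} (hdc : d ≤ c) (s : Set ℝ) (g : ℝ × ℝ → ℝ) :
    ∫ z in s ×ˢ Icc c d, g z = 0 := by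
  refine setIntegral_measure_zero g ?_
  rw [Measure.volume_eq_prod, Measure.prod_prod, Real.volume_Icc,
    ENNReal.ofReal_eq_zero.2 (sub_nonpos.2 hdc), mul_zero]

lemma Continuous.integrable_indicator_of_subset_isCompact {X : Type*} [TopologicalSpace X]
    [T2Space X] [MeasurableSpace X] [OpensMeasurableSpace X] {μ : Measure X}
    [IsFiniteMeasureOnCompacts μ] {g : X → ℝ} (hg : Continuous g) {s K : Set X}
    (hs : MeasurableSet s) (hK : IsCompact K) (hsK : s ⊆ K) : Integrable (s.indicator g) μ :=
  (integrable_indicator_iff hs).2 ((hg.continuousOn.integrableOn_compact hK).mono_set hsK)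

section LinearOrder

variable {α : Type*} [LinearOrder α]

lemma Iic_inter_Icc_eq (p a b : α) : Iic p ∩ Icc a b = Icc a (min b p) := by
  ext x; simp only [mem_inter_iff, mem_Iic, mem_Icc, le_min_iff]; tauto

lemma Ici_inter_Icc_eq (p c d : α) : Ici p ∩ Icc c d = Icc (max c p) d := by
  ext x; simp only [mem_inter_iff, mem_Ici, mem_Icc, max_le_iff]; tauto

lemma Ici_inter_Ico_eq (p c d : α) : Ici p ∩ Ico c d = Ico (max c p) d := by
  ext x; simp only [mem_inter_iff, mem_Ici, mem_Ico, max_le_iff]; tauto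

end LinearOrder

lemma setIntegral_Iic_prod_Ici_indicator_Icc_prod (p a b : ℝ) {t : Set ℝ} (ht : MeasurableSet t)
    (g : ℝ × ℝ → ℝ) :
    ∫ z in Iic p ×ˢ Ici p, (Icc a b ×ˢ t).indicator g z
      = ∫ z in Icc a (min b p) ×ˢ (Ici p ∩ t), g z := by
  rw [setIntegral_indicator (measurableSet_Icc.prod ht), prod_inter_prod, Iic_inter_Icc_eq]

lemma setIntegral_Iic_prod_Ici_indicator_Icc_prod_Icc (p a b c d : ℝ) (g : ℝ × ℝ → ℝ) :
    ∫ z in Iic p ×ˢ Ici p, (Icc a b ×ˢ Icc c d).indicator g z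
      = ∫ z in Icc a (min b p) ×ˢ Icc (max c p) d, g z := by
  rw [setIntegral_Iic_prod_Ici_indicator_Icc_prod p a b measurableSet_Icc, Ici_inter_Icc_eq]

lemma setIntegral_Iic_prod_Ici_indicator_Icc_prod_Ico (p a b c d : ℝ) (g : ℝ × ℝ → ℝ) :
    ∫ z in Iic p ×ˢ Ici p, (Icc a b ×ˢ Ico c d).indicator g z
      = ∫ z in Icc a (min b p) ×ˢ Icc (max c p) d, g z := by
  rw [setIntegral_Iic_prod_Ici_indicator_Icc_prod p a b measurableSet_Ico, Ici_inter_Ico_eq,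
    Measure.volume_eq_prod]
  exact setIntegral_congr_set (Measure.set_prod_ae_eq (by rfl) Ico_ae_eq_Icc)

lemma aNorm_pos : 0 < aNorm :=
  mul_pos two_pos (Real.log_pos (by norm_num))

lemma sub_mul_baseDensity (z : ℝ × ℝ) :
    (z.2 - z.1) * baseDensity z = 36 / (1 + 8 * aNorm) *
      ((Icc 0 (1/6) ×ˢ Ico (1/3) (1/2)).indicator (fun w => 5/6 - w.1 - w.2) z
        + aNorm * (Icc 0 (1/6) ×ˢ Icc (1/2) (2/3)).indicator (fun w => w.2 - w.1) z
        + 2 * aNorm * ((Icc 0 (1/6) ×ˢ Icc (5/6) 1).indicator (fun w => w.2 - w.1) z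
          + (Icc (5/6) 1 ×ˢ Icc (5/6) 1).indicator (fun w => w.2 - w.1) z
          + (Icc (5/6) 1 ×ˢ Icc 0 (1/6)).indicator (fun w => w.2 - w.1) z)
        + (Icc (1/3) (1/2) ×ˢ Icc (2/3) (5/6)).indicator (fun w => w.2 - w.1) z) := by
  have d34 : Disjoint (Icc (0:ℝ) (1/6) ×ˢ Icc (5/6:ℝ) 1) (Icc (5/6:ℝ) 1 ×ˢ Icc (5/6:ℝ) 1) :=
    disjoint_left.2 fun w h h' => by linarith [h.1.2, h'.1.1]
  have d345 : Disjoint (Icc (0:ℝ) (1/6) ×ˢ Icc (5/6:ℝ) 1 ∪ Icc (5/6:ℝ) 1 ×ˢ Icc (5/6:ℝ) 1)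
      (Icc (5/6:ℝ) 1 ×ˢ Icc (0:ℝ) (1/6)) := by
    refine disjoint_left.2 fun w h h' => ?_
    rcases h with h | h <;> linarith [h.2.1, h'.2.2]
  have h_one (Q : Set (ℝ × ℝ)) :
      Q.indicator (fun w => w.2 - w.1) z = (z.2 - z.1) * Q.indicator (fun _ => 1) z := by
    rw [← indicator_mul_right Q (fun w => w.2 - w.1)]
    simp only [mul_one]
  have h_Q1 : (Icc 0 (1/6) ×ˢ Ico (1/3) (1/2)).indicator (fun w => 5/6 - w.1 - w.2) z
      = (z.2 - z.1) * (Icc 0 (1/6) ×ˢ Ico (1/3) (1/2)).indicator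
          (fun w => (5 - 6 * (w.2 + w.1)) / (6 * (w.2 - w.1))) z := by
    rw [← indicator_mul_right _ (fun w : ℝ × ℝ => w.2 - w.1)]
    refine congrFun (indicator_congr fun w hw => ?_) z
    have : w.2 - w.1 ≠ 0 := by linarith [hw.1.2, hw.2.1]
    field_simp
    ring
  simp only [baseDensity, indicator_union_of_disjoint d345, indicator_union_of_disjoint d34, h_one,
    h_Q1]
  ring

lemma expGFT_eq_setIntegral (p : ℝ) :
    expGFT p = ∫ z in Iic p ×ˢ Ici p, (z.2 - z.1) * baseDensity z := by
  have hT : {w : ℝ × ℝ | w.1 ≤ p ∧ p ≤ w.2} = Iic p ×ˢ Ici p := rfl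
  rw [expGFT, hT, ← integral_indicator (measurableSet_Iic.prod measurableSet_Ici)]
  congr 1
  funext z
  by_cases h : z ∈ Iic p ×ˢ Ici p <;> simp [h]

lemma expGFT_eq_sum_rectangles (p : ℝ) :
    expGFT p = 36 / (1 + 8 * aNorm) *
      ((∫ z in Icc 0 (min (1/6) p) ×ˢ Icc (max (1/3) p) (1/2), (5/6 - z.1 - z.2))
        + aNorm * (∫ z in Icc 0 (min (1/6) p) ×ˢ Icc (max (1/2) p) (2/3), (z.2 - z.1))
        + 2 * aNorm * ((∫ z in Icc 0 (min (1/6) p) ×ˢ Icc (max (5/6) p) 1, (z.2 - z.1))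
          + (∫ z in Icc (5/6) (min 1 p) ×ˢ Icc (max (5/6) p) 1, (z.2 - z.1))
          + ∫ z in Icc (5/6) (min 1 p) ×ˢ Icc (max 0 p) (1/6), (z.2 - z.1))
        + ∫ z in Icc (1/3) (min (1/2) p) ×ˢ Icc (max (2/3) p) (5/6), (z.2 - z.1)) := by
  have h_Q1 : Integrable ((Icc 0 (1/6) ×ˢ Ico (1/3) (1/2)).indicator
      (fun w : ℝ × ℝ => 5/6 - w.1 - w.2)) (volume.restrict (Iic p ×ˢ Ici p)) :=
    Continuous.integrable_indicator_of_subset_isCompact (by fun_prop)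
      (measurableSet_Icc.prod measurableSet_Ico) (isCompact_Icc.prod isCompact_Icc)
      (prod_mono subset_rfl Ico_subset_Icc_self)
  have h_rect (a b c d : ℝ) : Integrable ((Icc a b ×ˢ Icc c d).indicator
      (fun w : ℝ × ℝ => w.2 - w.1)) (volume.restrict (Iic p ×ˢ Ici p)) :=
    Continuous.integrable_indicator_of_subset_isCompact (by fun_prop)
      (measurableSet_Icc.prod measurableSet_Icc) (isCompact_Icc.prod isCompact_Icc) subset_rfl
  rw [expGFT_eq_setIntegral]
  simp only [sub_mul_baseDensity]
  rw [integral_const_mul, integral_add (by fun_prop) (by fun_prop),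
    integral_add (by fun_prop) (by fun_prop), integral_add (by fun_prop) (by fun_prop),
    integral_const_mul, integral_const_mul, integral_add (by fun_prop) (by fun_prop),
    integral_add (by fun_prop) (by fun_prop)]
  simp only [setIntegral_Iic_prod_Ici_indicator_Icc_prod_Icc,
    setIntegral_Iic_prod_Ici_indicator_Icc_prod_Ico]

/-- Analytic expression of the expected gain from trade of the base distribution
on the intervals (1/6,1/2], (1/2,2/3], (2/3,5/6]. -/
theorem expGFT_base_formula (p : ℝ) :
    (p ∈ Set.Ioc (1/6:ℝ) (1/2) → expGFT p = (2 + 13 * aNorm) / (6 * (1 + 8 * aNorm))) ∧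
    (p ∈ Set.Ioc (1/2:ℝ) (2/3) →
      expGFT p = (-18 * aNorm * p ^ 2 + 3 * aNorm * p + 2 * (1 + 8 * aNorm))
        / (6 * (1 + 8 * aNorm))) ∧
    (p ∈ Set.Ioc (2/3:ℝ) (5/6) →
      expGFT p = (-18 * p ^ 2 + 15 * p + 10 * aNorm) / (6 * (1 + 8 * aNorm))) := by
  have hC : 1 + 8 * aNorm ≠ 0 := by linarith [aNorm_pos]
  refine ⟨fun ⟨h1, h2⟩ => ?_, fun ⟨h1, h2⟩ => ?_, fun ⟨h1, h2⟩ => ?_⟩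
  -- at `p = 1/3` the piece on `Q6` starts to contribute and the one on `Q1` starts to shrink
  on_goal 1 => rcases le_total p (1/3) with h | h
  all_goals
    rw [expGFT_eq_sum_rectangles]
    simp (disch := grind) only [min_eq_left, min_eq_right, max_eq_left, max_eq_right,
      setIntegral_Icc_prod_Icc_sub, setIntegral_Icc_prod_Icc_const_sub_sub,
      setIntegral_Icc_prod_of_le, setIntegral_prod_Icc_of_le]
    field_simp
    ring
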